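/- Under the setting of the previous well-neighborhood identity (W satisfying (H1)–(H3), (H4′), 𝓡 ⊂ Ω convex compact with separated well images, F(z) := min_{x∈𝓡} 2√(W(x,z)), σ as defined), let i ∈ {1,…,k}, let p ∈ ℝ^M with dist(p, z_i(𝓡)) ≤ σ, and let q ∈ z_i(𝓡) realize the distance, i.e. dist(p, z_i(𝓡)) = |p − q|. Then the line segment parametrization ℓ_{p,q}(t) := ((1−t)/2)p + ((1+t)/2)q is a minimizing geodesic for d_F(p,q), and d_F(p,q) = ∫_{−1}^1 F(ℓ_{p,q}(t))|ℓ_{p,q}′(t)| dt = √(α_i)·|p − q|². -/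

import Mathlib

open MeasureTheory Set Filter Topology Metric
open scoped ENNReal NNReal RealInnerProductSpace ContDiff MeasureTheory

noncomputable section

namespace ModicaMortola

variable {N M k : ℕ}

/-- `ℝ^N` as a Euclidean space (the physical domain). -/
abbrev Dom (N : ℕ) := EuclideanSpace ℝ (Fin N)

/-- `ℝ^M` as a Euclidean space (the target of the phase variable). -/
abbrev Tgt (M : ℕ) := EuclideanSpace ℝ (Fin M)

/-- `Ω` has Lipschitz continuous boundary: near every boundary point, in suitable
orthonormal coordinates, `Ω` coincides with the open region above the graph of a
Lipschitz function. -/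
def HasLipschitzBoundary (Ω : Set (Dom N)) : Prop :=
  ∀ x ∈ frontier Ω, ∃ (ρ : ℝ) (ν : Dom N) (f : Dom N → ℝ) (L : ℝ≥0),
    0 < ρ ∧ ‖ν‖ = 1 ∧ LipschitzWith L f ∧
    Ω ∩ ball x ρ = { y ∈ ball x ρ | f (y - ⟪y, ν⟫ • ν) < ⟪y, ν⟫ }

/-! ### Admissible curves and degenerate geodesic distances -/

/-- `(γ, g)` represents a curve in the admissible class `𝒜(p,q)`:
`γ ∈ W^{1,1}((-1,1);ℝ^M)`, identified with its absolutely continuous representative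
(with a.e. derivative `g`), with `γ(-1) = p` and `γ(1) = q`. -/
def IsAdmissible (p q : Tgt M) (γ g : ℝ → Tgt M) : Prop :=
  IntegrableOn g (Ioo (-1 : ℝ) 1) volume ∧
  (∀ t ∈ Icc (-1 : ℝ) 1, γ t = p + ∫ s in Ioc (-1 : ℝ) t, g s) ∧
  γ (-1) = p ∧ γ 1 = q

/-- Euclidean length `L(γ) = ∫_{-1}^1 |γ'(t)| dt` of an admissible curve. -/
def clen (g : ℝ → Tgt M) : ℝ := ∫ t in Ioo (-1 : ℝ) 1, ‖g t‖

/-- The length `∫_{-1}^1 F(γ(t)) |γ'(t)| dt` weighted by a conformal factor `F`. -/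
def wlen (F : Tgt M → ℝ) (γ g : ℝ → Tgt M) : ℝ :=
  ∫ t in Ioo (-1 : ℝ) 1, F (γ t) * ‖g t‖

/-- The (possibly degenerate) geodesic distance `d_F(p,q)`. -/
def dF (F : Tgt M → ℝ) (p q : Tgt M) : ℝ :=
  sInf { r | ∃ γ g, IsAdmissible p q γ g ∧ r = wlen F γ g }

/-- The geodesic distance `d_W(x,p,q)` induced by the conformal factor `2√(W(x,·))`. -/
def dW (W : Dom N → Tgt M → ℝ) (x : Dom N) (p q : Tgt M) : ℝ :=
  dF (fun z => 2 * Real.sqrt (W x z)) p q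

/-! ### The hypotheses (H1)–(H4) on the potential -/

/-- Hypothesis (H1): `W ≥ 0` is Lipschitz on every compact subset of `Ω̄ × ℝ^M` and,
for every `x ∈ Ω̄`, `W(x,p) = 0` iff `p ∈ {z_1(x),…,z_k(x)}`, with `z_i` Lipschitz on `Ω̄`. -/
def HypH1 (Ω : Set (Dom N)) (W : Dom N → Tgt M → ℝ) (z : Fin k → Dom N → Tgt M) : Prop :=
  (∀ x ∈ closure Ω, ∀ p, 0 ≤ W x p) ∧
  (∀ K : Set (Dom N × Tgt M), IsCompact K → K ⊆ (closure Ω) ×ˢ (univ : Set (Tgt M)) →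
    ∃ L : ℝ≥0, LipschitzOnWith L (fun q : Dom N × Tgt M => W q.1 q.2) K) ∧
  (∀ x ∈ closure Ω, ∀ p, W x p = 0 ↔ ∃ i, p = z i x) ∧
  (∀ i, ∃ L : ℝ≥0, LipschitzOnWith L (z i) (closure Ω))

/-- Hypothesis (H2): the wells are uniformly separated by `δ > 0`. -/
def HypH2 (Ω : Set (Dom N)) (z : Fin k → Dom N → Tgt M) (δ : ℝ) : Prop :=
  0 < δ ∧ ∀ x ∈ closure Ω, ∀ i j : Fin k, i ≠ j → δ ≤ ‖z i x - z j x‖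

/-- Hypothesis (H3): `W(x,p) = α_i |p - z_i(x)|²` for `p ∈ B(z_i(x), r)`. -/
def HypH3 (Ω : Set (Dom N)) (W : Dom N → Tgt M → ℝ) (z : Fin k → Dom N → Tgt M)
    (r : ℝ) (α : Fin k → ℝ) : Prop :=
  0 < r ∧ (∀ i, 0 < α i) ∧
    ∀ x ∈ Ω, ∀ (i : Fin k) (p : Tgt M), ‖p - z i x‖ < r → W x p = α i * ‖p - z i x‖ ^ 2

/-- Hypothesis (H4): `W(x,p) ≥ S|p|` for `|p| > R`. -/
def HypH4 (Ω : Set (Dom N)) (W : Dom N → Tgt M → ℝ) (R S : ℝ) : Prop :=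
  0 < R ∧ 0 < S ∧ ∀ x ∈ Ω, ∀ p : Tgt M, R < ‖p‖ → S * ‖p‖ ≤ W x p

/-- Hypothesis (H4′): `W(x,p) ≥ η > 0` whenever `p` lies outside all balls `B(z_i(x), r/2)`. -/
def HypH4' (Ω : Set (Dom N)) (W : Dom N → Tgt M → ℝ) (z : Fin k → Dom N → Tgt M)
    (r η : ℝ) : Prop :=
  0 < η ∧ ∀ x ∈ Ω, ∀ p : Tgt M, (∀ i : Fin k, r / 2 ≤ ‖p - z i x‖) → η ≤ W x p

/-! ### Sobolev functions and the Modica–Mortola functionals -/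

/-- `Du` is a weak (distributional) gradient of `u` on the open set `Ω`. -/
def IsWeakGradOn {G : Type*} [NormedAddCommGroup G] [NormedSpace ℝ G]
    (Ω : Set (Dom N)) (u : Dom N → G) (Du : Dom N → Dom N →L[ℝ] G) : Prop :=
  ∀ φ : Dom N → ℝ, ContDiff ℝ ∞ φ → HasCompactSupport φ → tsupport φ ⊆ Ω →
    ∀ v : Dom N, ∫ x in Ω, fderiv ℝ φ x v • u x = - ∫ x in Ω, φ x • Du x v

/-- `u ∈ H¹(Ω;ℝ^M)` with weak gradient `Du`. -/
def MemH1 (Ω : Set (Dom N)) (u : Dom N → Tgt M) (Du : Dom N → Dom N →L[ℝ] Tgt M) : Prop :=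
  MemLp u 2 (volume.restrict Ω) ∧ MemLp Du 2 (volume.restrict Ω) ∧ IsWeakGradOn Ω u Du

/-- The squared Frobenius norm `|∇u(x)|²` of the gradient. -/
def gradSq (Du : Dom N → Dom N →L[ℝ] Tgt M) (x : Dom N) : ℝ :=
  ∑ i : Fin N, ‖Du x (EuclideanSpace.single i 1)‖ ^ 2

/-- The energy `∫_Ω [ε⁻¹ W(x,u) + ε |∇u|²] dx` computed with a given weak gradient. -/
def energyOf (Ω : Set (Dom N)) (W : Dom N → Tgt M → ℝ) (ε : ℝ)
    (u : Dom N → Tgt M) (Du : Dom N → Dom N →L[ℝ] Tgt M) : ℝ≥0∞ :=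
  ∫⁻ x in Ω, ENNReal.ofReal (ε⁻¹ * W x (u x) + ε * gradSq Du x)

/-- The Modica–Mortola functional `F_ε : L¹(Ω;ℝ^M) → [0,∞]`, equal to `+∞` off `H¹(Ω;ℝ^M)`. -/
def Feps (Ω : Set (Dom N)) (W : Dom N → Tgt M → ℝ) (ε : ℝ) (u : Dom N → Tgt M) : ℝ≥0∞ :=
  sInf { e | ∃ Du, MemH1 Ω u Du ∧ e = energyOf Ω W ε u Du }

/-- Convergence `u_n → v` in `L¹(Ω;ℝ^M)`. -/
def TendstoL1 (Ω : Set (Dom N)) (u : ℕ → Dom N → Tgt M) (v : Dom N → Tgt M) : Prop :=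
  Tendsto (fun n => ∫ x in Ω, ‖u n x - v x‖) atTop (𝓝 0)

/-- The `L¹(Ω;ℝ^M)` distance. -/
def L1dist (Ω : Set (Dom N)) (u v : Dom N → Tgt M) : ℝ :=
  ∫ x in Ω, ‖u x - v x‖

/-! ### BV functions, jump sets and the sharp interface functional -/

/-- Scalar total variation of `f` on `Ω`, defined by duality with `C^∞_c` vector fields. -/
def totalVarScalar (Ω : Set (Dom N)) (f : Dom N → ℝ) : ℝ≥0∞ :=
  ⨆ φ ∈ {φ : Fin N → Dom N → ℝ |
      (∀ i, ContDiff ℝ ∞ (φ i) ∧ HasCompactSupport (φ i) ∧ tsupport (φ i) ⊆ Ω) ∧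
      ∀ x, ∑ i : Fin N, (φ i x) ^ 2 ≤ 1},
    ENNReal.ofReal (∫ x in Ω, f x * ∑ i : Fin N, fderiv ℝ (φ i) x (EuclideanSpace.single i 1))

/-- Total variation `|Du|(Ω)` of a vector-valued `u`, defined by duality. -/
def totalVar (Ω : Set (Dom N)) (u : Dom N → Tgt M) : ℝ≥0∞ :=
  ⨆ φ ∈ {φ : Fin M → Fin N → Dom N → ℝ |
      (∀ j i, ContDiff ℝ ∞ (φ j i) ∧ HasCompactSupport (φ j i) ∧ tsupport (φ j i) ⊆ Ω) ∧
      ∀ x, ∑ j : Fin M, ∑ i : Fin N, (φ j i x) ^ 2 ≤ 1},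
    ENNReal.ofReal (∫ x in Ω,
      ∑ j : Fin M, u x j * ∑ i : Fin N, fderiv ℝ (φ j i) x (EuclideanSpace.single i 1))

/-- `u ∈ BV(Ω;ℝ^M)`. -/
def MemBV (Ω : Set (Dom N)) (u : Dom N → Tgt M) : Prop :=
  IntegrableOn u Ω volume ∧ totalVar Ω u < ⊤

/-- `u ∈ BV(Ω; z_1, …, z_k)`: `u` is of bounded variation and takes values in the wells a.e. -/
def MemBVwells (Ω : Set (Dom N)) (z : Fin k → Dom N → Tgt M) (u : Dom N → Tgt M) : Prop :=
  MemBV Ω u ∧ ∀ᵐ x ∂(volume.restrict Ω), ∃ i, u x = z i x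

/-- `x` is an approximate jump point of `u` with one-sided traces `a, b` and normal `ν`. -/
def JumpAt (u : Dom N → Tgt M) (x : Dom N) (a b : Tgt M) (ν : Dom N) : Prop :=
  a ≠ b ∧ ‖ν‖ = 1 ∧
  Tendsto (fun ρ : ℝ =>
      (ρ ^ N)⁻¹ * ∫ y in {y ∈ ball x ρ | 0 ≤ ⟪y - x, ν⟫}, ‖u y - a‖)
    (𝓝[>] 0) (𝓝 0) ∧
  Tendsto (fun ρ : ℝ =>
      (ρ ^ N)⁻¹ * ∫ y in {y ∈ ball x ρ | ⟪y - x, ν⟫ ≤ 0}, ‖u y - b‖)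
    (𝓝[>] 0) (𝓝 0)

/-- The approximate jump set `J_u`. -/
def jumpSet (u : Dom N → Tgt M) : Set (Dom N) :=
  { x | ∃ a b ν, JumpAt u x a b ν }

open Classical in
/-- The pair of one-sided traces `(u⁺(x), u⁻(x))` at a jump point (an arbitrary admissible
choice; it is unique up to a swap). -/
def jumpVals (u : Dom N → Tgt M) (x : Dom N) : Tgt M × Tgt M :=
  if h : ∃ q : Tgt M × Tgt M × Dom N, JumpAt u x q.1 q.2.1 q.2.2
  then (h.choose.1, h.choose.2.1) else (0, 0)

/-- The interfacial energy `∫_{J_u ∩ Ω} d_W(x, u⁺(x), u⁻(x)) dH^{N-1}(x)`. -/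
def jumpEnergy (Ω : Set (Dom N)) (W : Dom N → Tgt M → ℝ) (u : Dom N → Tgt M) : ℝ≥0∞ :=
  ∫⁻ x in Ω ∩ jumpSet u,
    ENNReal.ofReal (dW W x (jumpVals u x).1 (jumpVals u x).2) ∂(μH[(N : ℝ) - 1])

open Classical in
/-- The sharp interface functional `F_0 : L¹(Ω;ℝ^M) → [0,∞]`. -/
def F0 (Ω : Set (Dom N)) (W : Dom N → Tgt M → ℝ) (z : Fin k → Dom N → Tgt M)
    (u : Dom N → Tgt M) : ℝ≥0∞ :=
  if MemBVwells Ω z u then jumpEnergy Ω W u else ⊤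

open Classical in
/-- The relaxed sharp interface functional `F̃_0`, finite on all functions taking values in
the wells a.e. with finite interfacial energy (no BV requirement). -/
def F0tilde (Ω : Set (Dom N)) (W : Dom N → Tgt M → ℝ) (z : Fin k → Dom N → Tgt M)
    (u : Dom N → Tgt M) : ℝ≥0∞ :=
  if ∀ᵐ x ∂(volume.restrict Ω), ∃ i, u x = z i x then jumpEnergy Ω W u else ⊤

/-! ### Mass constraint, traces, partitions -/

open Classical in
/-- The mass-constrained functional `F_ε^𝓜`. -/
def FepsM (Ω : Set (Dom N)) (W : Dom N → Tgt M → ℝ) (ε : ℝ) (𝓜 : Tgt M)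
    (u : Dom N → Tgt M) : ℝ≥0∞ :=
  if IntegrableOn u Ω volume ∧ (∫ x in Ω, u x) = 𝓜 then Feps Ω W ε u else ⊤

open Classical in
/-- The mass-constrained sharp interface functional `F_0^𝓜`. -/
def F0M (Ω : Set (Dom N)) (W : Dom N → Tgt M → ℝ) (z : Fin k → Dom N → Tgt M)
    (𝓜 : Tgt M) (u : Dom N → Tgt M) : ℝ≥0∞ :=
  if IntegrableOn u Ω volume ∧ (∫ x in Ω, u x) = 𝓜 then F0 Ω W z u else ⊤

/-- `u` has boundary value `a` at the boundary point `x` (Lebesgue point characterization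
of the trace). -/
def HasTraceAt (Ω : Set (Dom N)) (u : Dom N → Tgt M) (x : Dom N) (a : Tgt M) : Prop :=
  Tendsto (fun ρ : ℝ => (ρ ^ N)⁻¹ * ∫ y in Ω ∩ ball x ρ, ‖u y - a‖) (𝓝[>] 0) (𝓝 0)

/-- `Tr u = g` on `∂Ω`, up to an `H^{N-1}`-negligible set. -/
def IsTrace (Ω : Set (Dom N)) (u : Dom N → Tgt M) (g : Dom N → Tgt M) : Prop :=
  ∀ᵐ x ∂((μH[(N : ℝ) - 1]).restrict (frontier Ω)), HasTraceAt Ω u x (g x)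

open Classical in
/-- The trace function `Tr u` on `∂Ω` (an arbitrary admissible choice of boundary values). -/
def traceFun (Ω : Set (Dom N)) (u : Dom N → Tgt M) (x : Dom N) : Tgt M :=
  if h : ∃ a, HasTraceAt Ω u x a then h.choose else 0

open Classical in
/-- The Dirichlet functional `F_ε^D`. -/
def FepsD (Ω : Set (Dom N)) (W : Dom N → Tgt M → ℝ) (ε : ℝ) (g : Dom N → Tgt M)
    (u : Dom N → Tgt M) : ℝ≥0∞ :=
  if IsTrace Ω u g then Feps Ω W ε u else ⊤

/-- The Dirichlet sharp interface functional
`F_0^D(u) = F_0(u) + ∫_{∂Ω} d_W(x, Tr u(x), g(x)) dH^{N-1}(x)`. -/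
def F0D (Ω : Set (Dom N)) (W : Dom N → Tgt M → ℝ) (z : Fin k → Dom N → Tgt M)
    (g : Dom N → Tgt M) (u : Dom N → Tgt M) : ℝ≥0∞ :=
  F0 Ω W z u +
    ∫⁻ x in frontier Ω, ENNReal.ofReal (dW W x (traceFun Ω u x) (g x)) ∂(μH[(N : ℝ) - 1])

/-- `E` has finite perimeter in `Ω`. -/
def HasFinitePerimeterIn (Ω E : Set (Dom N)) : Prop :=
  totalVarScalar Ω (E.indicator fun _ => (1 : ℝ)) < ⊤

/-- `{P i}` is a Caccioppoli partition of `Ω`. -/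
def CaccioppoliPartition (Ω : Set (Dom N)) (P : Fin k → Set (Dom N)) : Prop :=
  (∀ i, P i ⊆ Ω) ∧ (∀ i j, i ≠ j → Disjoint (P i) (P j)) ∧ (⋃ i, P i) = Ω ∧
    ∀ i, HasFinitePerimeterIn Ω (P i)

/-- `E` is a polyhedral set in `Ω`: `∂E ∩ Ω` is contained in finitely many hyperplanes. -/
def IsPolyhedralIn (Ω E : Set (Dom N)) : Prop :=
  ∃ (m : ℕ) (v : Fin m → Dom N) (c : Fin m → ℝ),
    (∀ j, v j ≠ 0) ∧ frontier E ∩ Ω ⊆ ⋃ j, { x | ⟪x, v j⟫ = c j }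

/-- The function `u = Σ_i z_i 1_{P i}` associated with a partition. -/
def partitionFun (z : Fin k → Dom N → Tgt M) (P : Fin k → Set (Dom N)) (x : Dom N) : Tgt M :=
  ∑ i, (P i).indicator (fun y => z i y) x

/-- The point `x` has density `t` for the set `E`. -/
def densityAt (E : Set (Dom N)) (x : Dom N) (t : ℝ≥0∞) : Prop :=
  Tendsto (fun ρ : ℝ => volume (E ∩ ball x ρ) / volume (ball x ρ)) (𝓝[>] 0) (𝓝 t)

/-- The essential boundary `∂*E`. -/
def essBoundary (E : Set (Dom N)) : Set (Dom N) :=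
  { x | ¬ densityAt E x 0 ∧ ¬ densityAt E x 1 }

/-! ### Conformal factors induced by a region `𝓡` -/

/-- `F(z) = min { 2√(W(x,z)) : x ∈ 𝓡 }`. -/
def confFactor (W : Dom N → Tgt M → ℝ) (𝓡 : Set (Dom N)) (p : Tgt M) : ℝ :=
  sInf ((fun x => 2 * Real.sqrt (W x p)) '' 𝓡)

/-- The constant `σ` of Proposition 3.2. -/
def sigmaConst (r δ η : ℝ) (α : Fin k → ℝ) : ℝ :=
  (1 / 2) * min (min r δ) (min ((⨅ i, α i) / (⨆ i, α i) * δ) (Real.sqrt (η / (⨆ i, α i))))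

/-- `Σ_σ(𝓡) = min { F(z) : z ∉ ∪_i 𝒩_{σ/2}(z_i(𝓡)) }`. -/
def SigmaLB (W : Dom N → Tgt M → ℝ) (z : Fin k → Dom N → Tgt M) (𝓡 : Set (Dom N))
    (σ : ℝ) : ℝ :=
  sInf ((confFactor W 𝓡) '' { p : Tgt M | p ∉ ⋃ i, cthickening (σ / 2) (z i '' 𝓡) })

end ModicaMortola

open ModicaMortola

/-! Within distance `σ` of the well image `S = z_i(𝓡)` the conformal factor satisfies
`F ≥ 2√α_i · dist(·, S)`: near the own well by (H3), near another well because the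
separation of the `δ/2`-neighbourhoods forces `|w - z_j(x)| ≥ δ/2`, and elsewhere by (H4′).
Along an admissible curve `γ`, `h(t) = dist(γ(t), S)` is absolutely continuous with
`|h'| ≤ |γ'|`, so after the last time `h ≥ h(-1) = |p - q|` we have
`F(γ)|γ'| ≥ 2√α_i h |h'| ≥ -(√α_i h²)'`; integrating gives `d_F(p,q) ≥ √α_i |p - q|²`.
The segment attains this bound, because (H3) at the foot point `q = z_i(x)` gives
`F(ℓ(t)) ≤ 2√α_i |ℓ(t) - q| = √α_i (1 - t) |p - q|`. -/

theorem AbsolutelyContinuousOnInterval.of_dist_le {X Y : Type*} [PseudoMetricSpace X]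
    [PseudoMetricSpace Y] {f : ℝ → X} {U : ℝ → Y} {a b : ℝ}
    (hU : AbsolutelyContinuousOnInterval U a b)
    (h : ∀ s ∈ uIcc a b, ∀ t ∈ uIcc a b, dist (f s) (f t) ≤ dist (U s) (U t)) :
    AbsolutelyContinuousOnInterval f a b := by
  refine squeeze_zero' (Eventually.of_forall fun E => Finset.sum_nonneg fun _ _ => dist_nonneg)
    ?_ hU
  filter_upwards [mem_inf_of_right (mem_principal_self _)] with E hE
  exact Finset.sum_le_sum fun i hi => h _ (hE.1 i hi).1 _ (hE.1 i hi).2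

theorem HasDerivAt.norm_le_of_dist_le {E F : Type*} [NormedAddCommGroup E] [NormedSpace ℝ E]
    [NormedAddCommGroup F] [NormedSpace ℝ F] {f : ℝ → E} {U : ℝ → F} {f' : E} {U' : F} {x : ℝ}
    (hf : HasDerivAt f f' x) (hU : HasDerivAt U U' x)
    (h : ∀ᶠ y in 𝓝 x, dist (f y) (f x) ≤ dist (U y) (U x)) : ‖f'‖ ≤ ‖U'‖ := by
  refine le_of_tendsto_of_tendsto (hasDerivAt_iff_tendsto_slope.1 hf).norm
    (hasDerivAt_iff_tendsto_slope.1 hU).norm ?_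
  filter_upwards [nhdsWithin_le_nhds h] with y hy
  simp only [slope, vsub_eq_sub, norm_smul, ← dist_eq_norm]
  gcongr

theorem sq_sub_sq_le_two_mul_integral_of_dist_le {h u : ℝ → ℝ} {a b : ℝ} (hab : a ≤ b)
    (hu : IntervalIntegrable u volume a b) (hu0 : ∀ t, 0 ≤ u t) (hh0 : ∀ t ∈ Icc a b, 0 ≤ h t)
    (hh : ∀ s ∈ Icc a b, ∀ t ∈ Icc a b, s ≤ t → dist (h s) (h t) ≤ ∫ τ in s..t, u τ) :
    h a ^ 2 - h b ^ 2 ≤ 2 * ∫ t in a..b, h t * u t := by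
  set U : ℝ → ℝ := fun t => ∫ τ in a..t, u τ
  have hUAC : AbsolutelyContinuousOnInterval U a b :=
    hu.absolutelyContinuousOnInterval_intervalIntegral left_mem_uIcc
  have hhU : ∀ s ∈ Icc a b, ∀ t ∈ Icc a b, dist (h s) (h t) ≤ dist (U s) (U t) := by
    have hsub : ∀ t ∈ Icc a b, IntervalIntegrable u volume a t := fun t ht =>
      hu.mono_set (uIcc_subset_uIcc_left (by rwa [uIcc_of_le hab]))
    intro s hs t ht
    wlog hst : s ≤ t generalizing s t
    · rw [dist_comm, dist_comm (U s)]; exact this t ht s hs (le_of_not_ge hst)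
    calc dist (h s) (h t) ≤ ∫ τ in s..t, u τ := hh s hs t ht hst
      _ = U t - U s := (intervalIntegral.integral_interval_sub_left (hsub t ht) (hsub s hs)).symm
      _ ≤ dist (U s) (U t) := by rw [dist_comm, Real.dist_eq]; exact le_abs_self _
  have hAC : AbsolutelyContinuousOnInterval h a b :=
    hUAC.of_dist_le (by rw [uIcc_of_le hab]; exact hhU)
  have hderiv : ∀ᵐ t ∂volume.restrict (Icc a b),
      -(deriv h t * h t + h t * deriv h t) ≤ 2 * (h t * u t) := by
    refine (ae_restrict_congr_set Ioo_ae_eq_Icc).1 ?_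
    rw [ae_restrict_iff' measurableSet_Ioo]
    filter_upwards [hAC.ae_differentiableAt, hu.ae_hasDerivAt_integral] with t hdiff hU ht
    have htI : t ∈ uIcc a b := by rw [uIcc_of_le hab]; exact Ioo_subset_Icc_self ht
    have hbound : ‖deriv h t‖ ≤ ‖u t‖ :=
      (hdiff htI).hasDerivAt.norm_le_of_dist_le (hU htI a left_mem_uIcc) <| by
        filter_upwards [Icc_mem_nhds ht.1 ht.2] with y hy
        exact hhU y hy t (Ioo_subset_Icc_self ht)
    rw [Real.norm_eq_abs, Real.norm_eq_abs, abs_of_nonneg (hu0 t)] at hbound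
    have hht := hh0 t (Ioo_subset_Icc_self ht)
    nlinarith [neg_abs_le (deriv h t), mul_le_mul_of_nonneg_left hbound hht]
  have hint : IntervalIntegrable (fun t => deriv h t * h t + h t * deriv h t) volume a b :=
    (hAC.intervalIntegrable_deriv.mul_continuousOn hAC.continuousOn).add
      (hAC.intervalIntegrable_deriv.continuousOn_mul hAC.continuousOn)
  calc h a ^ 2 - h b ^ 2 = ∫ t in a..b, -(deriv h t * h t + h t * deriv h t) := by
        rw [intervalIntegral.integral_neg, hAC.integral_deriv_mul_eq_sub hAC]; ring
    _ ≤ ∫ t in a..b, 2 * (h t * u t) :=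
        intervalIntegral.integral_mono_ae_restrict hab hint.neg
          ((hu.continuousOn_mul hAC.continuousOn).const_mul 2) hderiv
    _ = 2 * ∫ t in a..b, h t * u t := intervalIntegral.integral_const_mul _ _

theorem Metric.mem_cthickening_of_infDist_le {X : Type*} [PseudoMetricSpace X] {E : Set X}
    {x : X} {δ : ℝ} (hE : E.Nonempty) (h : infDist x E ≤ δ) : x ∈ cthickening δ E := by
  rw [mem_cthickening_iff, ← ENNReal.ofReal_toReal (infEDist_ne_top hE)]
  exact ENNReal.ofReal_le_ofReal h

namespace ModicaMortola

section AdmissibleCurves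

variable {M : ℕ} {p q : Tgt M} {γ g : ℝ → Tgt M}

theorem wlen_eq_intervalIntegral (F : Tgt M → ℝ) (γ g : ℝ → Tgt M) :
    wlen F γ g = ∫ t in (-1 : ℝ)..1, F (γ t) * ‖g t‖ := by
  rw [wlen, intervalIntegral.integral_of_le (by norm_num), integral_Ioc_eq_integral_Ioo]

namespace IsAdmissible

theorem intervalIntegrable (hγ : IsAdmissible p q γ g) :
    IntervalIntegrable g volume (-1) 1 :=
  (intervalIntegrable_iff_integrableOn_Ioc_of_le (by norm_num)).2
    ((integrableOn_Ioc_iff_integrableOn_Ioo (by finiteness)).2 hγ.1)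

theorem eq_add_intervalIntegral (hγ : IsAdmissible p q γ g) {t : ℝ} (ht : t ∈ Icc (-1 : ℝ) 1) :
    γ t = p + ∫ s in (-1 : ℝ)..t, g s := by
  rw [hγ.2.1 t ht, intervalIntegral.integral_of_le ht.1]

theorem continuousOn (hγ : IsAdmissible p q γ g) : ContinuousOn γ (Icc (-1) 1) := by
  have hprim := intervalIntegral.continuousOn_primitive_interval' hγ.intervalIntegrable
    left_mem_uIcc
  rw [uIcc_of_le (by norm_num)] at hprim
  exact (continuousOn_const.add hprim).congr fun t ht => hγ.eq_add_intervalIntegral ht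

theorem dist_le_intervalIntegral (hγ : IsAdmissible p q γ g) {s t : ℝ}
    (hs : s ∈ Icc (-1 : ℝ) 1) (ht : t ∈ Icc (-1 : ℝ) 1) (hst : s ≤ t) :
    dist (γ s) (γ t) ≤ ∫ τ in s..t, ‖g τ‖ := by
  have hsub : ∀ x ∈ Icc (-1 : ℝ) 1, IntervalIntegrable g volume (-1) x := fun x hx =>
    hγ.intervalIntegrable.mono_set (uIcc_subset_uIcc_left (by rwa [uIcc_of_le (by norm_num)]))
  rw [dist_comm, dist_eq_norm, hγ.eq_add_intervalIntegral ht, hγ.eq_add_intervalIntegral hs,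
    add_sub_add_left_eq_sub, intervalIntegral.integral_interval_sub_left (hsub t ht) (hsub s hs)]
  exact intervalIntegral.norm_integral_le_integral_norm hst

theorem intervalIntegrable_mul_norm {F : Tgt M → ℝ} (hF : Continuous F)
    (hγ : IsAdmissible p q γ g) :
    IntervalIntegrable (fun t => F (γ t) * ‖g t‖) volume (-1) 1 :=
  hγ.intervalIntegrable.norm.continuousOn_mul
    (hF.comp_continuousOn (by rw [uIcc_of_le (by norm_num)]; exact hγ.continuousOn))

theorem mul_sq_infDist_le_wlen {F : Tgt M → ℝ} {S : Set (Tgt M)} {c σ : ℝ}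
    (hc : 0 ≤ c) (hF0 : ∀ w, 0 ≤ F w) (hFc : Continuous F)
    (hF : ∀ w, infDist w S ≤ σ → 2 * c * infDist w S ≤ F w)
    (hp : infDist p S ≤ σ) (hq : q ∈ S) (hγ : IsAdmissible p q γ g) :
    c * infDist p S ^ 2 ≤ wlen F γ g := by
  set h : ℝ → ℝ := fun t => infDist (γ t) S
  -- after the last time `t₁` at which `γ` is as far from `S` as `p`, it stays within `σ` of `S`
  set T := {t ∈ Icc (-1 : ℝ) 1 | infDist p S ≤ h t}
  have hT : IsClosed T := ((continuous_infDist_pt S).comp_continuousOn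
    hγ.continuousOn).preimage_isClosed_of_isClosed isClosed_Icc isClosed_Ici
  have hTne : T.Nonempty := ⟨-1, ⟨by norm_num, by norm_num⟩, by simp [h, hγ.2.2.1]⟩
  set t₁ := sSup T
  have ht₁ : t₁ ∈ T := hT.csSup_mem hTne ⟨1, fun t ht => ht.1.2⟩
  have hclose : ∀ t ∈ Ioo t₁ 1, h t ≤ σ := fun t ht =>
    (le_of_not_ge fun hle => ht.1.not_ge
      (le_csSup ⟨1, fun s hs => hs.1.2⟩ ⟨⟨by linarith [ht₁.1.1, ht.1], ht.2.le⟩, hle⟩)).trans hp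
  have hsub : Icc t₁ 1 ⊆ Icc (-1 : ℝ) 1 := Icc_subset_Icc_left ht₁.1.1
  have huIcc : uIcc t₁ 1 ⊆ uIcc (-1 : ℝ) 1 := by
    rw [uIcc_of_le ht₁.1.2, uIcc_of_le (by norm_num)]; exact hsub
  have hgI := hγ.intervalIntegrable.norm.mono_set huIcc
  have hdrop := sq_sub_sq_le_two_mul_integral_of_dist_le ht₁.1.2 hgI
    (fun t => norm_nonneg (g t)) (fun t _ => infDist_nonneg)
    (fun s hs t ht hst => by
      have hlip : dist (h s) (h t) ≤ dist (γ s) (γ t) := by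
        simpa using (lipschitz_infDist_pt S).dist_le_mul (γ s) (γ t)
      exact hlip.trans (hγ.dist_le_intervalIntegral (hsub hs) (hsub ht) hst))
  have hwlen := hγ.intervalIntegrable_mul_norm hFc
  calc c * infDist p S ^ 2 ≤ c * (h t₁ ^ 2 - h 1 ^ 2) := by
        have : h 1 = 0 := by simp only [h, hγ.2.2.2, infDist_zero_of_mem hq]
        rw [this, zero_pow two_ne_zero, sub_zero]
        gcongr
        exacts [infDist_nonneg, ht₁.2]
    _ ≤ ∫ t in t₁..1, 2 * c * (h t * ‖g t‖) := by
        rw [intervalIntegral.integral_const_mul]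
        nlinarith [mul_le_mul_of_nonneg_left hdrop hc]
    _ ≤ ∫ t in t₁..1, F (γ t) * ‖g t‖ := by
        refine intervalIntegral.integral_mono_on_of_le_Ioo ht₁.1.2 ?_ ?_ fun t ht => ?_
        · refine (hgI.continuousOn_mul ((continuous_infDist_pt S).comp_continuousOn
            (hγ.continuousOn.mono ?_))).const_mul _
          rwa [uIcc_of_le ht₁.1.2]
        · exact hwlen.mono_set huIcc
        · rw [← mul_assoc]
          exact mul_le_mul_of_nonneg_right (hF _ (hclose t ht)) (norm_nonneg _)
    _ ≤ wlen F γ g := by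
        rw [wlen_eq_intervalIntegral]
        exact intervalIntegral.integral_mono_interval ht₁.1.1 ht₁.1.2 le_rfl
          (Eventually.of_forall fun t => mul_nonneg (hF0 _) (norm_nonneg _)) hwlen

end IsAdmissible

theorem isAdmissible_segment (p q : Tgt M) :
    IsAdmissible p q (fun t => ((1 - t) / 2) • p + ((1 + t) / 2) • q)
      (fun _ => (2⁻¹ : ℝ) • (q - p)) := by
  refine ⟨integrableOn_const measure_Ioo_lt_top.ne, fun t ht => ?_, by norm_num, by norm_num⟩
  rw [setIntegral_const, Real.volume_real_Ioc_of_le ht.1, smul_smul]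
  match_scalars <;> ring

theorem dF_le_wlen {F : Tgt M → ℝ} (hF0 : ∀ w, 0 ≤ F w) (hγ : IsAdmissible p q γ g) :
    dF F p q ≤ wlen F γ g := by
  refine csInf_le ⟨0, ?_⟩ ⟨γ, g, hγ, rfl⟩
  rintro _ ⟨γ', g', -, rfl⟩
  exact integral_nonneg fun t => mul_nonneg (hF0 _) (norm_nonneg _)

theorem mul_sq_infDist_le_dF {F : Tgt M → ℝ} {S : Set (Tgt M)} {c σ : ℝ}
    (hc : 0 ≤ c) (hF0 : ∀ w, 0 ≤ F w) (hFc : Continuous F)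
    (hF : ∀ w, infDist w S ≤ σ → 2 * c * infDist w S ≤ F w)
    (hp : infDist p S ≤ σ) (hq : q ∈ S) : c * infDist p S ^ 2 ≤ dF F p q :=
  le_csInf ⟨_, _, _, isAdmissible_segment p q, rfl⟩ fun _ ⟨_, _, hγ, hr⟩ =>
    hr ▸ hγ.mul_sq_infDist_le_wlen hc hF0 hFc hF hp hq

theorem norm_segment_sub_right {t : ℝ} (ht : t ≤ 1) :
    ‖((1 - t) / 2) • p + ((1 + t) / 2) • q - q‖ = (1 - t) / 2 * ‖p - q‖ := by
  have : ((1 - t) / 2) • p + ((1 + t) / 2) • q - q = ((1 - t) / 2) • (p - q) := by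
    match_scalars <;> ring
  rw [this, norm_smul, Real.norm_of_nonneg (by linarith)]

theorem wlen_segment_le {F : Tgt M → ℝ} {c : ℝ} (hFc : Continuous F)
    (hF : ∀ t ∈ Icc (-1 : ℝ) 1, F (((1 - t) / 2) • p + ((1 + t) / 2) • q)
      ≤ 2 * c * ‖((1 - t) / 2) • p + ((1 + t) / 2) • q - q‖) :
    wlen F (fun t => ((1 - t) / 2) • p + ((1 + t) / 2) • q) (fun _ => (2⁻¹ : ℝ) • (q - p))
      ≤ c * ‖p - q‖ ^ 2 := by
  have hg : ‖(2⁻¹ : ℝ) • (q - p)‖ = ‖p - q‖ / 2 := by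
    rw [norm_smul, norm_sub_rev, Real.norm_of_nonneg (by norm_num)]; ring
  rw [wlen_eq_intervalIntegral]
  calc _ ≤ ∫ t in (-1 : ℝ)..1, c * ‖p - q‖ ^ 2 / 2 * (1 - t) := by
        refine intervalIntegral.integral_mono_on (by norm_num)
          ((isAdmissible_segment p q).intervalIntegrable_mul_norm hFc)
          (by apply Continuous.intervalIntegrable; fun_prop) fun t ht => ?_
        have := mul_le_mul_of_nonneg_right (hF t ht) (by positivity : 0 ≤ ‖p - q‖ / 2)
        rw [norm_segment_sub_right ht.2] at this
        rw [hg]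
        linarith
    _ = c * ‖p - q‖ ^ 2 := by
        have : ∫ t in (-1 : ℝ)..1, (1 - t) = 2 := by
          rw [intervalIntegral.integral_sub intervalIntegrable_const
            intervalIntegral.intervalIntegrable_id]
          norm_num [integral_id]
        rw [intervalIntegral.integral_const_mul, this]
        ring

end AdmissibleCurves

variable {N M k : ℕ}

theorem HypH1.continuousOn {Ω : Set (Dom N)} {W : Dom N → Tgt M → ℝ} {z : Fin k → Dom N → Tgt M}
    (h1 : HypH1 Ω W z) :
    ContinuousOn (fun q : Dom N × Tgt M => W q.1 q.2) (closure Ω ×ˢ univ) := by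
  rintro ⟨x, w⟩ hxw
  set K := (closure Ω ×ˢ univ) ∩ (closedBall x 1 ×ˢ closedBall w 1)
  have hK : IsCompact K :=
    ((isCompact_closedBall x 1).prod (isCompact_closedBall w 1)).inter_left
      (isClosed_closure.prod isClosed_univ)
  obtain ⟨L, hL⟩ := h1.2.1 K hK inter_subset_left
  refine (hL.continuousOn _ ⟨hxw, mem_closedBall_self zero_le_one,
    mem_closedBall_self zero_le_one⟩).mono_of_mem_nhdsWithin ?_
  exact inter_mem_nhdsWithin _
    (prod_mem_nhds (closedBall_mem_nhds _ one_pos) (closedBall_mem_nhds _ one_pos))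

section ConformalFactor

variable {W : Dom N → Tgt M → ℝ} {𝓡 : Set (Dom N)}

theorem continuous_confFactor (hW : ContinuousOn (fun q : Dom N × Tgt M => W q.1 q.2) (𝓡 ×ˢ univ))
    (h𝓡 : IsCompact 𝓡) : Continuous (confFactor W 𝓡) := by
  have : CompactSpace 𝓡 := isCompact_iff_compactSpace.1 h𝓡
  have hf : Continuous fun q : Tgt M × 𝓡 => 2 * Real.sqrt (W q.2 q.1) :=
    continuous_const.mul (hW.comp_continuous (f := fun q : Tgt M × 𝓡 => ((q.2 : Dom N), q.1))
      (by fun_prop) fun q => ⟨q.2.2, mem_univ _⟩).sqrt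
  convert isCompact_univ.continuous_sInf (f := fun w (x : 𝓡) => 2 * √(W x w)) hf using 2 with w
  rw [image_univ, confFactor, image_eq_range]

theorem confFactor_nonneg (w : Tgt M) : 0 ≤ confFactor W 𝓡 w :=
  Real.sInf_nonneg fun _ ⟨_, _, hx⟩ => hx ▸ by positivity

theorem confFactor_le {x : Dom N} (hx : x ∈ 𝓡) (w : Tgt M) :
    confFactor W 𝓡 w ≤ 2 * Real.sqrt (W x w) :=
  csInf_le ⟨0, fun _ ⟨_, _, hy⟩ => hy ▸ by positivity⟩ (mem_image_of_mem _ hx)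

end ConformalFactor

section SigmaConst

variable {r δ η d : ℝ} {α : Fin k → ℝ}

theorem sigmaConst_le_half_r : sigmaConst r δ η α ≤ r / 2 := by
  unfold sigmaConst
  linarith [min_le_left (min r δ) (min ((⨅ i, α i) / (⨆ i, α i) * δ) √(η / ⨆ i, α i)),
    min_le_left r δ]

theorem sigmaConst_le_half_δ : sigmaConst r δ η α ≤ δ / 2 := by
  unfold sigmaConst
  linarith [min_le_left (min r δ) (min ((⨅ i, α i) / (⨆ i, α i) * δ) √(η / ⨆ i, α i)),
    min_le_right r δ]

theorem mul_sq_le_mul_half_δ_sq (hα : ∀ i, 0 < α i) (hd0 : 0 ≤ d)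
    (hd : d ≤ sigmaConst r δ η α) (i j : Fin k) : α i * d ^ 2 ≤ α j * (δ / 2) ^ 2 := by
  have hmin : (⨅ i, α i) ≤ α j := ciInf_le (Finite.bddBelow_range α) j
  have hmax : α i ≤ ⨆ i, α i := le_ciSup (Finite.bddAbove_range α) i
  have hd' : d ≤ (⨅ i, α i) / (⨆ i, α i) * δ / 2 := by
    refine hd.trans ?_
    unfold sigmaConst
    linarith [min_le_right (min r δ) (min ((⨅ i, α i) / (⨆ i, α i) * δ) √(η / ⨆ i, α i)),
      min_le_left ((⨅ i, α i) / (⨆ i, α i) * δ) √(η / ⨆ i, α i)]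
  have hδ : d ≤ δ / 2 := hd.trans sigmaConst_le_half_δ
  have hαd : α i * d ≤ α j * (δ / 2) := by
    have hM : 0 < ⨆ i, α i := (hα i).trans_le hmax
    calc α i * d ≤ (⨆ i, α i) * d := mul_le_mul_of_nonneg_right hmax hd0
      _ ≤ (⨆ i, α i) * ((⨅ i, α i) / (⨆ i, α i) * δ / 2) := mul_le_mul_of_nonneg_left hd' hM.le
      _ = (⨅ i, α i) * (δ / 2) := by field_simp
      _ ≤ α j * (δ / 2) := mul_le_mul_of_nonneg_right hmin (by linarith)
  calc α i * d ^ 2 = (α i * d) * d := by ring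
    _ ≤ (α j * (δ / 2)) * (δ / 2) := mul_le_mul hαd hδ hd0 (by nlinarith [hα j])
    _ = α j * (δ / 2) ^ 2 := by ring

theorem mul_sq_le_η (hα : ∀ i, 0 < α i) (hη : 0 < η) (hd0 : 0 ≤ d)
    (hd : d ≤ sigmaConst r δ η α) (i : Fin k) : α i * d ^ 2 ≤ η := by
  have hmax : α i ≤ ⨆ i, α i := le_ciSup (Finite.bddAbove_range α) i
  have hM : 0 < ⨆ i, α i := (hα i).trans_le hmax
  have hd' : d ≤ √(η / ⨆ i, α i) / 2 := by
    refine hd.trans ?_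
    unfold sigmaConst
    linarith [min_le_right (min r δ) (min ((⨅ i, α i) / (⨆ i, α i) * δ) √(η / ⨆ i, α i)),
      min_le_right ((⨅ i, α i) / (⨆ i, α i) * δ) √(η / ⨆ i, α i)]
  have hsq : d ^ 2 ≤ η / (⨆ i, α i) / 4 := by
    have := pow_le_pow_left₀ hd0 hd' 2
    rw [div_pow, Real.sq_sqrt (by positivity)] at this
    linarith
  calc α i * d ^ 2 ≤ (⨆ i, α i) * (η / (⨆ i, α i) / 4) :=
        mul_le_mul hmax hsq (sq_nonneg d) hM.le
    _ = η / 4 := by field_simp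
    _ ≤ η := by linarith

end SigmaConst

section Wells

variable {Ω : Set (Dom N)} {W : Dom N → Tgt M → ℝ} {z : Fin k → Dom N → Tgt M}
  {r δ η : ℝ} {α : Fin k → ℝ} {𝓡 : Set (Dom N)} {i : Fin k} {x : Dom N} {w : Tgt M}

theorem mul_sq_infDist_le (h3 : HypH3 Ω W z r α) (h4' : HypH4' Ω W z r η) (h𝓡sub : 𝓡 ⊆ Ω)
    (hsep : ∀ i j : Fin k, i ≠ j →
      Disjoint (cthickening (δ / 2) (z i '' 𝓡)) (cthickening (δ / 2) (z j '' 𝓡)))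
    (hx : x ∈ 𝓡) (hw : infDist w (z i '' 𝓡) ≤ sigmaConst r δ η α) :
    α i * infDist w (z i '' 𝓡) ^ 2 ≤ W x w := by
  obtain ⟨hr, hα, hW⟩ := h3
  have hd0 : 0 ≤ infDist w (z i '' 𝓡) := infDist_nonneg
  by_cases hnear : ∃ j, ‖w - z j x‖ < r / 2
  · obtain ⟨j, hj⟩ := hnear
    rw [hW x (h𝓡sub hx) j w (by linarith)]
    obtain rfl | hji := eq_or_ne j i
    · refine mul_le_mul_of_nonneg_left (pow_le_pow_left₀ hd0 ?_ 2) (hα j).le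
      rw [← dist_eq_norm]
      exact infDist_le_dist_of_mem (mem_image_of_mem _ hx)
    · have hfar : δ / 2 ≤ ‖w - z j x‖ := by
        by_contra! hlt
        exact disjoint_left.1 (hsep i j hji.symm)
          (mem_cthickening_of_infDist_le ⟨_, mem_image_of_mem _ hx⟩
            (hw.trans sigmaConst_le_half_δ))
          (mem_cthickening_of_dist_le w (z j x) _ _ (mem_image_of_mem _ hx)
            (by rw [dist_eq_norm]; exact hlt.le))
      calc α i * infDist w (z i '' 𝓡) ^ 2 ≤ α j * (δ / 2) ^ 2 :=
            mul_sq_le_mul_half_δ_sq hα hd0 hw i j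
        _ ≤ α j * ‖w - z j x‖ ^ 2 := by
            have : 0 ≤ δ / 2 := hd0.trans (hw.trans sigmaConst_le_half_δ)
            gcongr
            exact (hα j).le
  · simp only [not_exists, not_lt] at hnear
    exact (mul_sq_le_η hα h4'.1 hd0 hw i).trans (h4'.2 x (h𝓡sub hx) w hnear)

theorem two_mul_sqrt_mul_infDist_le_confFactor (h3 : HypH3 Ω W z r α)
    (h4' : HypH4' Ω W z r η) (h𝓡sub : 𝓡 ⊆ Ω)
    (hsep : ∀ i j : Fin k, i ≠ j →
      Disjoint (cthickening (δ / 2) (z i '' 𝓡)) (cthickening (δ / 2) (z j '' 𝓡)))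
    (h𝓡 : 𝓡.Nonempty) (hw : infDist w (z i '' 𝓡) ≤ sigmaConst r δ η α) :
    2 * √(α i) * infDist w (z i '' 𝓡) ≤ confFactor W 𝓡 w := by
  refine le_csInf (h𝓡.image _) (forall_mem_image.2 fun x hx => ?_)
  rw [mul_assoc, ← Real.sqrt_sq (infDist_nonneg (x := w)), ← Real.sqrt_mul (h3.2.1 i).le]
  gcongr
  exact mul_sq_infDist_le h3 h4' h𝓡sub hsep hx hw

theorem confFactor_le_of_norm_sub_lt (h3 : HypH3 Ω W z r α) (h𝓡sub : 𝓡 ⊆ Ω) (hx : x ∈ 𝓡)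
    (hw : ‖w - z i x‖ < r) : confFactor W 𝓡 w ≤ 2 * √(α i) * ‖w - z i x‖ := by
  calc confFactor W 𝓡 w ≤ 2 * √(W x w) := confFactor_le hx w
    _ = 2 * √(α i) * ‖w - z i x‖ := by
      rw [h3.2.2 x (h𝓡sub hx) i w hw, Real.sqrt_mul (h3.2.1 i).le, Real.sqrt_sq (norm_nonneg _),
        mul_assoc]

end Wells

end ModicaMortola

theorem segment_is_minimizing_geodesic_general
    (N M k : ℕ)
    (Ω : Set (Dom N))
    (W : Dom N → Tgt M → ℝ) (z : Fin k → Dom N → Tgt M)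
    (δ r η : ℝ) (α : Fin k → ℝ)
    (h1 : HypH1 Ω W z) (h3 : HypH3 Ω W z r α)
    (h4' : HypH4' Ω W z r η)
    (𝓡 : Set (Dom N)) (h𝓡c : IsCompact 𝓡) (h𝓡sub : 𝓡 ⊆ Ω)
    (hsep : ∀ i j : Fin k, i ≠ j →
      Disjoint (cthickening (δ / 2) (z i '' 𝓡)) (cthickening (δ / 2) (z j '' 𝓡)))
    (i : Fin k) (p q : Tgt M)
    (hp : infDist p (z i '' 𝓡) ≤ sigmaConst r δ η α)
    (hq : q ∈ z i '' 𝓡) (hpq : ‖p - q‖ = infDist p (z i '' 𝓡)) :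
    IsAdmissible p q (fun t => ((1 - t) / 2) • p + ((1 + t) / 2) • q)
      (fun _ => (2⁻¹ : ℝ) • (q - p)) ∧
    wlen (confFactor W 𝓡) (fun t => ((1 - t) / 2) • p + ((1 + t) / 2) • q)
      (fun _ => (2⁻¹ : ℝ) • (q - p)) = dF (confFactor W 𝓡) p q ∧
    dF (confFactor W 𝓡) p q = Real.sqrt (α i) * ‖p - q‖ ^ 2 := by
  have hFc : Continuous (confFactor W 𝓡) := continuous_confFactor
    (h1.continuousOn.mono (prod_mono (h𝓡sub.trans subset_closure) subset_rfl)) h𝓡c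
  have hseg := isAdmissible_segment p q
  have hlower : √(α i) * ‖p - q‖ ^ 2 ≤ dF (confFactor W 𝓡) p q := by
    rw [hpq]
    exact mul_sq_infDist_le_dF (Real.sqrt_nonneg _) confFactor_nonneg hFc
      (fun w => two_mul_sqrt_mul_infDist_le_confFactor h3 h4' h𝓡sub hsep
        (image_nonempty.1 ⟨q, hq⟩)) hp hq
  have hpr : ‖p - q‖ ≤ r / 2 := hpq ▸ hp.trans sigmaConst_le_half_r
  obtain ⟨x, hx, rfl⟩ := hq
  have hupper := wlen_segment_le (p := p) (c := √(α i)) hFc fun t ht =>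
    confFactor_le_of_norm_sub_lt h3 h𝓡sub hx <| by
      rw [norm_segment_sub_right ht.2]
      nlinarith [h3.1, norm_nonneg (p - z i x), ht.1]
  have hmin := dF_le_wlen (F := confFactor W 𝓡) confFactor_nonneg hseg
  exact ⟨hseg, by linarith, by linarith⟩

/-- **Step 2 of Proposition 3.2.** If `p ∈ 𝒩_σ(z_i(𝓡))` and `q ∈ z_i(𝓡)` realizes the
distance, then the line segment from `p` to `q` is a minimizing geodesic for `d_F(p,q)`,
with `d_F(p,q) = √(α_i)|p - q|²`. -/
theorem segment_is_minimizing_geodesic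
    (N M k : ℕ) [NeZero k] (hN : 2 ≤ N)
    (Ω : Set (Dom N)) (hΩopen : IsOpen Ω) (hΩbdd : Bornology.IsBounded Ω)
    (hΩlip : HasLipschitzBoundary Ω)
    (W : Dom N → Tgt M → ℝ) (z : Fin k → Dom N → Tgt M)
    (δ r η : ℝ) (α : Fin k → ℝ)
    (h1 : HypH1 Ω W z) (h2 : HypH2 Ω z δ) (h3 : HypH3 Ω W z r α)
    (h4' : HypH4' Ω W z r η)
    (𝓡 : Set (Dom N)) (h𝓡c : IsCompact 𝓡) (h𝓡conv : Convex ℝ 𝓡) (h𝓡sub : 𝓡 ⊆ Ω)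
    (hsep : ∀ i j : Fin k, i ≠ j →
      Disjoint (cthickening (δ / 2) (z i '' 𝓡)) (cthickening (δ / 2) (z j '' 𝓡)))
    (i : Fin k) (p q : Tgt M)
    (hp : infDist p (z i '' 𝓡) ≤ sigmaConst r δ η α)
    (hq : q ∈ z i '' 𝓡) (hpq : ‖p - q‖ = infDist p (z i '' 𝓡)) :
    IsAdmissible p q (fun t => ((1 - t) / 2) • p + ((1 + t) / 2) • q)
      (fun _ => (2⁻¹ : ℝ) • (q - p)) ∧
    wlen (confFactor W 𝓡) (fun t => ((1 - t) / 2) • p + ((1 + t) / 2) • q)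
      (fun _ => (2⁻¹ : ℝ) • (q - p)) = dF (confFactor W 𝓡) p q ∧
    dF (confFactor W 𝓡) p q = Real.sqrt (α i) * ‖p - q‖ ^ 2 :=
  segment_is_minimizing_geodesic_general N M k Ω W z δ r η α h1 h3 h4' 𝓡 h𝓡c h𝓡sub hsep i p q hp hq
    hpq
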